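/- With the data of the construction of M(a,α,p,q) and α ≠ 0: the identity Re[ iz₂·P_{z₂}(z₂) + ((e^{−αP(z₂)} − 1)/α)·(1/2 + Q₀(z₂)/(2i))·a(z₂) ] = 0 holds for all z₂ ∈ Δ_{ε₀}. -/

import Mathlib

open Complex Metric Set

/-- The Wirtinger derivative `u_z = (∂u/∂x − i ∂u/∂y)/2` of `u` at `z`. -/
noncomputable def wirt (u : ℂ → ℂ) (z : ℂ) : ℂ :=
  (fderiv ℝ u z 1 - Complex.I * fderiv ℝ u z Complex.I) / 2

/-- The holomorphic function `a(z) = Σ_{n≥1} aₙ zⁿ` (with `a 0 = 0`). -/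
noncomputable def Afn (a : ℕ → ℂ) (z : ℂ) : ℂ := ∑' n : ℕ, a n * z ^ n

/-- The primitive-type series `Σ_{n≥1} (aₙ/n) zⁿ`. -/
noncomputable def Sfn (a : ℕ → ℂ) (z : ℂ) : ℂ := ∑' n : ℕ, a n / (n : ℂ) * z ^ n

/-- The series `Σ_{n≥1} (aₙ/(i n)) zⁿ`. -/
noncomputable def Tfn (a : ℕ → ℂ) (z : ℂ) : ℂ :=
  ∑' n : ℕ, a n / (Complex.I * (n : ℂ)) * z ^ n

/-- `R(z₂) = q(|z₂|) − Re (Σ_{n≥1} (aₙ/n) z₂ⁿ)`. -/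
noncomputable def Rfn (a : ℕ → ℂ) (q : ℝ → ℝ) (z : ℂ) : ℝ :=
  q ‖z‖ - (Sfn a z).re

/-- `Q₀(z₂) = tan (R(z₂))`. -/
noncomputable def Q0fn (a : ℕ → ℂ) (q : ℝ → ℝ) (z : ℂ) : ℝ := Real.tan (Rfn a q z)

/-- `P₁(z₂) = exp[p(|z₂|) + Re (Σ (aₙ/(i n)) z₂ⁿ) − log |cos (R(z₂))|]` for `z₂ ≠ 0`,
`P₁(0) = 0`. -/
noncomputable def P1fn (a : ℕ → ℂ) (q p : ℝ → ℝ) (z : ℂ) : ℝ :=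
  if z = 0 then 0
  else Real.exp (p ‖z‖ + (Tfn a z).re - Real.log |Real.cos (Rfn a q z)|)

/-- `f(z₂,t) = −(1/α) log |cos(R(z₂)+αt)/cos(R(z₂))|` if `α ≠ 0`, `tan(R(z₂))·t` if `α = 0`. -/
noncomputable def ffn (α : ℝ) (a : ℕ → ℂ) (q : ℝ → ℝ) (z : ℂ) (t : ℝ) : ℝ :=
  if α = 0 then Real.tan (Rfn a q z) * t
  else -(1 / α) * Real.log |Real.cos (Rfn a q z + α * t) / Real.cos (Rfn a q z)|

/-- `P = (1/α) log(1 + α P₁)` if `α ≠ 0`, `P = P₁` if `α = 0`. -/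
noncomputable def Pfn (α : ℝ) (a : ℕ → ℂ) (q p : ℝ → ℝ) (z : ℂ) : ℝ :=
  if α = 0 then P1fn a q p z else (1 / α) * Real.log (1 + α * P1fn a q p z)

/-- `L^α(z₁) = (e^{αz₁} − 1)/α` if `α ≠ 0`, `L⁰(z₁) = z₁`. -/
noncomputable def Lfn (α : ℝ) (z : ℂ) : ℂ :=
  if α = 0 then z else (Complex.exp ((α : ℂ) * z) - 1) / (α : ℂ)

/-!
At `z = 0` both terms vanish since `a(0) = 0`. For `z ≠ 0`, along the circle `θ ↦ z e^{iθ}` the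
radial data `p(|z|)`, `q(|z|)` are constant, so `P` there is an explicit function of the series
`S = Σ (aₙ/n) zⁿ` and `T = S/i`, whose angular derivatives at `θ = 0` are `Re (i a(z)) = -Im a(z)`
and `Re a(z)`. For a real function `u`, `Re (i z u_z)` is half the angular derivative of `u`, which
gives `Re (i z P_z) = P₁ (Re a + Q₀ Im a) / (2 (1 + α P₁))`. Since `e^{-αP} = 1/(1 + α P₁)`, the
second term is `-P₁ (Re a + Q₀ Im a) / (2 (1 + α P₁))`, and the two cancel.
-/

open Filter Asymptotics

lemma HasDerivAt.complex_re {f : ℝ → ℂ} {f' : ℂ} {x : ℝ} (h : HasDerivAt f f' x) :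
    HasDerivAt (fun t => (f t).re) f'.re x := by
  simpa [Function.comp_def] using reCLM.hasFDerivAt.comp_hasDerivAt x h

lemma hasDerivAt_mul_exp_mul_I (z : ℂ) (θ : ℝ) :
    HasDerivAt (fun θ : ℝ => z * exp (θ * I)) (z * exp (θ * I) * I) θ := by
  simpa [mul_assoc] using
    (((hasDerivAt_id θ).ofReal_comp.mul_const I).cexp.const_mul z)

lemma norm_mul_exp_ofReal_mul_I (z : ℂ) (θ : ℝ) : ‖z * exp (θ * I)‖ = ‖z‖ := by
  rw [norm_mul, norm_exp_ofReal_mul_I, mul_one]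

lemma re_mul_wirt_ofReal {u : ℂ → ℝ} {z : ℂ} {D : ℂ →L[ℝ] ℝ} (hu : HasFDerivAt u D z) (w : ℂ) :
    (w * wirt (fun x => (u x : ℂ)) z).re = D w / 2 := by
  have hw : w = w.re • (1 : ℂ) + w.im • I := by
    apply Complex.ext <;> simp
  have hu' : HasFDerivAt (fun x => (u x : ℂ)) (ofRealCLM.comp D) z :=
    ofRealCLM.hasFDerivAt.comp z hu
  rw [wirt, hu'.fderiv]
  conv_rhs => rw [hw, map_add, map_smul, map_smul]
  simp [mul_re]
  ring

lemma re_I_mul_mul_wirt_ofReal_of_hasDerivAt {u : ℂ → ℝ} {z : ℂ} {u' : ℝ}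
    (hu : DifferentiableAt ℝ u z) (hrot : HasDerivAt (fun θ : ℝ => u (z * exp (θ * I))) u' 0) :
    (I * z * wirt (fun w => (u w : ℂ)) z).re = u' / 2 := by
  have hchain := hu.hasFDerivAt.comp_hasDerivAt_of_eq (0 : ℝ)
    (by simpa using hasDerivAt_mul_exp_mul_I z 0) (by simp)
  rw [re_mul_wirt_ofReal hu.hasFDerivAt, mul_comm I z, hchain.unique hrot]

lemma re_ofReal_mul_half_add_div_two_I_mul (c Q : ℝ) (A : ℂ) :
    ((c : ℂ) * ((1 / 2 : ℂ) + (Q : ℂ) / (2 * I)) * A).re = c * (A.re + Q * A.im) / 2 := by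
  have h : (1 / 2 : ℂ) + (Q : ℂ) / (2 * I) = ((1 / 2 : ℝ) : ℂ) + ((-Q / 2 : ℝ) : ℂ) * I := by
    field_simp
    push_cast
    ring_nf
    rw [I_sq]
    ring
  rw [h]
  simp [mul_re, mul_im]
  ring

lemma summable_norm_mul_pow_of_mem_ball {c : ℕ → ℂ} {ε : ℝ}
    (hc : ∀ w ∈ ball (0 : ℂ) ε, Summable fun n => c n * w ^ n) {z : ℂ} (hz : z ∈ ball 0 ε) :
    Summable fun n => ‖c n‖ * ‖z‖ ^ n := by
  obtain ⟨ρ, hzρ, hρε⟩ := exists_between (mem_ball_zero_iff.1 hz)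
  have hρ : 0 < ρ := (norm_nonneg z).trans_lt hzρ
  have hbound : (fun n => ‖c n * (ρ : ℂ) ^ n‖) =O[atTop] fun _ => (1 : ℝ) :=
    ((hc ρ (by simpa [abs_of_pos hρ] using hρε)).tendsto_atTop_zero.isBigO_one ℝ).norm_left
  refine summable_of_isBigO_nat
    (summable_geometric_of_lt_one (by positivity) ((div_lt_one hρ).2 hzρ)) ?_
  refine ((hbound.mul (isBigO_refl (fun n => (‖z‖ / ρ) ^ n) atTop)).congr (fun n => ?_)
    (fun n => one_mul _))
  rw [norm_mul, norm_pow, norm_real, Real.norm_of_nonneg hρ.le, div_pow]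
  field_simp

lemma Real.cos_ne_zero_of_abs_le_one {x : ℝ} (hx : |x| ≤ 1) : Real.cos x ≠ 0 := by
  obtain ⟨hlo, hhi⟩ := abs_le.1 hx
  have hπ := Real.pi_gt_three
  exact (Real.cos_pos_of_mem_Ioo ⟨by linarith, by linarith⟩).ne'

section Construction

variable {a : ℕ → ℂ} {q p : ℝ → ℝ} {α : ℝ} {z : ℂ}

lemma Afn_zero (ha0 : a 0 = 0) : Afn a 0 = 0 := by
  rw [Afn, tsum_eq_single 0 fun n hn => by simp [hn]]
  simp [ha0]

lemma Tfn_eq_Sfn_div_I (a : ℕ → ℂ) (z : ℂ) : Tfn a z = Sfn a z / I := by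
  rw [Tfn, Sfn, ← tsum_div_const]
  congr 1 with n
  field_simp

lemma hasDerivAt_Sfn_mul_exp_mul_I (ha0 : a 0 = 0) (habs : Summable fun n => ‖a n‖ * ‖z‖ ^ n) :
    HasDerivAt (fun θ : ℝ => Sfn a (z * exp (θ * I))) (I * Afn a z) 0 := by
  have hterm : ∀ n (θ : ℝ), HasDerivAt (fun θ : ℝ => a n / n * (z * exp (θ * I)) ^ n)
      (I * (a n * (z * exp (θ * I)) ^ n)) θ := by
    intro n θ
    refine (((hasDerivAt_mul_exp_mul_I z θ).fun_pow n).const_mul (a n / n)).congr_deriv ?_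
    rcases n with _ | n
    · simp [ha0]
    · rw [Nat.add_sub_cancel, pow_succ]
      field_simp
  have hnorm : ∀ n (θ : ℝ), ‖I * (a n * (z * exp (θ * I)) ^ n)‖ = ‖a n‖ * ‖z‖ ^ n := by
    intro n θ
    simp [norm_exp_ofReal_mul_I]
  have hsum0 : Summable fun n => a n / n * (z * exp ((0 : ℝ) * I)) ^ n := by
    refine .of_norm_bounded habs fun n => ?_
    rcases n with _ | n
    · simp [ha0]
    · simp only [ofReal_zero, zero_mul, exp_zero, mul_one, norm_mul, norm_div, norm_pow]
      gcongr
      apply div_le_self (norm_nonneg _)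
      rw [Complex.norm_natCast]
      exact_mod_cast n.succ_pos
  have := hasDerivAt_tsum habs (fun n θ => hterm n θ) (fun n θ => (hnorm n θ).le) hsum0 0
  simpa [Sfn, Afn, tsum_mul_left] using this

lemma hasDerivAt_P1fn_mul_exp_mul_I (ha0 : a 0 = 0) (habs : Summable fun n => ‖a n‖ * ‖z‖ ^ n)
    (hz0 : z ≠ 0) (hcos : Real.cos (Rfn a q z) ≠ 0) :
    HasDerivAt (fun θ : ℝ => P1fn a q p (z * exp (θ * I)))
      (P1fn a q p z * ((Afn a z).re + Q0fn a q z * (Afn a z).im)) 0 := by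
  have hS := hasDerivAt_Sfn_mul_exp_mul_I ha0 habs
  have hT : HasDerivAt (fun θ : ℝ => (Tfn a (z * exp (θ * I))).re) (Afn a z).re 0 := by
    simpa [Tfn_eq_Sfn_div_I] using (hS.div_const I).complex_re
  have hR : HasDerivAt (fun θ : ℝ => Rfn a q (z * exp (θ * I))) (Afn a z).im 0 := by
    simpa [Rfn, norm_mul_exp_ofReal_mul_I] using hS.complex_re.const_sub (q ‖z‖)
  have hP1 : (fun θ : ℝ => P1fn a q p (z * exp (θ * I))) = fun θ : ℝ =>
      Real.exp (p ‖z‖ + (Tfn a (z * exp (θ * I))).re -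
        Real.log (Real.cos (Rfn a q (z * exp (θ * I))))) := by
    funext θ
    simp [P1fn, hz0, Real.log_abs]
  rw [hP1]
  refine (((hT.const_add (p ‖z‖)).sub (hR.cos.log (by simpa using hcos))).exp).congr_deriv ?_
  simp only [Pi.sub_apply, P1fn, hz0, if_false, Q0fn, Real.tan_eq_sin_div_cos, Real.log_abs,
    ofReal_zero, zero_mul, exp_zero, mul_one]
  field_simp
  ring

lemma Pfn_of_ne_zero (hα : α ≠ 0) :
    Pfn α a q p = fun w => 1 / α * Real.log (1 + α * P1fn a q p w) := by
  funext w
  simp [Pfn, hα]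

lemma differentiableAt_Pfn (hα : α ≠ 0) (hP1 : DifferentiableAt ℝ (P1fn a q p) z)
    (hpos : 1 + α * P1fn a q p z ≠ 0) : DifferentiableAt ℝ (Pfn α a q p) z := by
  rw [Pfn_of_ne_zero hα]
  exact (((hP1.const_mul α).const_add 1).log hpos).const_mul _

lemma hasDerivAt_Pfn_mul_exp_mul_I (hα : α ≠ 0) (ha0 : a 0 = 0)
    (habs : Summable fun n => ‖a n‖ * ‖z‖ ^ n) (hz0 : z ≠ 0) (hcos : Real.cos (Rfn a q z) ≠ 0)
    (hpos : 1 + α * P1fn a q p z ≠ 0) :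
    HasDerivAt (fun θ : ℝ => Pfn α a q p (z * exp (θ * I)))
      (P1fn a q p z * ((Afn a z).re + Q0fn a q z * (Afn a z).im) / (1 + α * P1fn a q p z)) 0 := by
  rw [Pfn_of_ne_zero hα]
  refine ((((hasDerivAt_P1fn_mul_exp_mul_I ha0 habs hz0 hcos).const_mul α).const_add 1).log
    (by simpa using hpos) |>.const_mul (1 / α)).congr_deriv ?_
  simp only [ofReal_zero, zero_mul, exp_zero, mul_one]
  field_simp

lemma exp_neg_mul_Pfn_sub_one_div (hα : α ≠ 0) (hpos : 0 < 1 + α * P1fn a q p z) :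
    (exp (-(α : ℂ) * (Pfn α a q p z : ℂ)) - 1) / α =
      ((-P1fn a q p z / (1 + α * P1fn a q p z) : ℝ) : ℂ) := by
  have hexp : Real.exp (-α * Pfn α a q p z) = (1 + α * P1fn a q p z)⁻¹ := by
    rw [neg_mul, Pfn_of_ne_zero hα, ← mul_assoc, mul_one_div_cancel hα, one_mul, Real.exp_neg,
      Real.exp_log hpos]
  rw [← ofReal_neg, ← ofReal_mul, ← ofReal_exp, hexp, ← ofReal_one, ← ofReal_sub,
    ← ofReal_div]
  congr 1
  field_simp
  ring

end Construction

theorem stmt11_general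
    (ε₀ : ℝ) (α : ℝ) (hα : α ≠ 0)
    (a : ℕ → ℂ) (ha0 : a 0 = 0)
    (hsum : ∀ z ∈ ball (0:ℂ) ε₀, Summable fun n : ℕ => a n * z ^ n)
    (q : ℝ → ℝ)
    (hRle : ∀ z ∈ ball (0:ℂ) ε₀, |Rfn a q z| ≤ 1)
    (p : ℝ → ℝ)
    (hP₁ : ContDiffOn ℝ 1 (P1fn a q p) (ball 0 ε₀))
    (hpos : ∀ z ∈ ball (0:ℂ) ε₀, 0 < 1 + α * P1fn a q p z) :
    ∀ z ∈ ball (0:ℂ) ε₀,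
      (Complex.I * z * wirt (fun w => ((Pfn α a q p w : ℝ) : ℂ)) z +
        ((Complex.exp (-(α : ℂ) * ((Pfn α a q p z : ℝ) : ℂ)) - 1) / (α : ℂ)) *
          ((1 / 2 : ℂ) + ((Q0fn a q z : ℝ) : ℂ) / (2 * Complex.I)) * Afn a z).re = 0 := by
  intro z hz
  rcases eq_or_ne z 0 with rfl | hz0
  · simp [Afn_zero ha0]
  have hpz := hpos z hz
  have hPdiff : DifferentiableAt ℝ (Pfn α a q p) z :=
    differentiableAt_Pfn hα
      ((hP₁.differentiableOn one_ne_zero).differentiableAt (isOpen_ball.mem_nhds hz)) hpz.ne'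
  have hrot := hasDerivAt_Pfn_mul_exp_mul_I hα ha0 (summable_norm_mul_pow_of_mem_ball hsum hz)
    hz0 (Real.cos_ne_zero_of_abs_le_one (hRle z hz)) hpz.ne'
  rw [add_re, re_I_mul_mul_wirt_ofReal_of_hasDerivAt hPdiff hrot,
    exp_neg_mul_Pfn_sub_one_div hα hpz, re_ofReal_mul_half_add_div_two_I_mul]
  field_simp
  ring

/-- Identity (iii) of the construction of `M(a,α,p,q)`, `α ≠ 0`:
`Re[ i z₂ P_{z₂}(z₂) + ((e^{−αP(z₂)} − 1)/α)(1/2 + Q₀(z₂)/(2i)) a(z₂) ] = 0` on `Δ_{ε₀}`. -/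
theorem stmt11
    (ε₀ : ℝ) (hε₀ : 0 < ε₀) (α : ℝ) (hα : α ≠ 0)
    (a : ℕ → ℂ) (ha0 : a 0 = 0) (hane : ∃ n, a n ≠ 0)
    (hsum : ∀ z ∈ ball (0:ℂ) ε₀, Summable fun n : ℕ => a n * z ^ n)
    (q : ℝ → ℝ) (hq0 : q 0 = 0)
    (hR : ContDiffOn ℝ 1 (Rfn a q) (ball 0 ε₀))
    (hRle : ∀ z ∈ ball (0:ℂ) ε₀, |Rfn a q z| ≤ 1)
    (p : ℝ → ℝ)
    (hP₁ : ContDiffOn ℝ 1 (P1fn a q p) (ball 0 ε₀))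
    (hpos : ∀ z ∈ ball (0:ℂ) ε₀, 0 < 1 + α * P1fn a q p z) :
    ∀ z ∈ ball (0:ℂ) ε₀,
      (Complex.I * z * wirt (fun w => ((Pfn α a q p w : ℝ) : ℂ)) z +
        ((Complex.exp (-(α : ℂ) * ((Pfn α a q p z : ℝ) : ℂ)) - 1) / (α : ℂ)) *
          ((1 / 2 : ℂ) + ((Q0fn a q z : ℝ) : ℂ) / (2 * Complex.I)) * Afn a z).re = 0 :=
  stmt11_general ε₀ α hα a ha0 hsum q hRle p hP₁ hpos
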